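/- arXiv:2311.00733 — 10 statements merged into one kernel-verified Lean document; each statement's English description precedes it below -/
import Mathlib

section
/- Let n, r ∈ ℕ and for each k ∈ Fin r let C_k be a finite set of affine functions on (Fin n → ZMod 2); define the satisfying set S(F) = {a : Fin n → ZMod 2 | ∀ k, ∃ ℓ ∈ C_k, ℓ a = 0} (each clause requires at least one of its linerals to hold). Then there exist m, t ∈ ℕ and finite sets C'_1, …, C'_t of affine functions on (Fin (n+m) → ZMod 2), each of cardinality at most 2, such that S(F) ≡_n S(G), where S(G) = {b : Fin (n+m) → ZMod 2 | ∀ i, ∃ ℓ ∈ C'_i, ℓ b = 0}. (Every formula in XNF is equisatisfiable, via a projection bijection on satisfying assignments, to a formula in 2-XNF.) -/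
/-- An affine function on assignments (the algebraic representation of a
lineral, i.e. an XOR of literals): `a ↦ c + ∑ i ∈ A, a i`. -/
def IsAffine {n : ℕ} (ℓ : (Fin n → ZMod 2) → ZMod 2) : Prop :=
  ∃ (c : ZMod 2) (A : Finset (Fin n)), ∀ a, ℓ a = c + ∑ i ∈ A, a i

private lemma zmod2_cases : ∀ v : ZMod 2, v = 0 ∨ v = 1 := by decide

private lemma zmod2_add_self : ∀ v : ZMod 2, v + v = 0 := by decide

private lemma zmod2_eq_of_add_eq_zero : ∀ v w : ZMod 2, v + w = 0 → v = w := by decide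

/-- Every XNF formula is equisatisfiable (via the projection to the first `n`
coordinates, which is a bijection on satisfying sets) to a 2-XNF formula. -/
theorem xnf_to_two_xnf (n r : ℕ)
    (C : Fin r → Finset ((Fin n → ZMod 2) → ZMod 2))
    (hC : ∀ k, ∀ ℓ ∈ C k, IsAffine ℓ) :
    ∃ (m t : ℕ) (C' : Fin t → Finset ((Fin (n + m) → ZMod 2) → ZMod 2)),
      (∀ i, ∀ ℓ ∈ C' i, IsAffine ℓ) ∧
      (∀ i, (C' i).card ≤ 2) ∧
      Set.BijOn (fun b => b ∘ Fin.castAdd m)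
        {b : Fin (n + m) → ZMod 2 | ∀ i, ∃ ℓ ∈ C' i, ℓ b = 0}
        {a : Fin n → ZMod 2 | ∀ k, ∃ ℓ ∈ C k, ℓ a = 0} := by
  classical
  -- the (finite) satisfying set of the original formula
  set Sf : Finset (Fin n → ZMod 2) :=
    Finset.univ.filter (fun a => ∀ k, ∃ ℓ ∈ C k, ℓ a = 0) with hSf
  set N := Sf.card with hNdef
  -- enumeration of the satisfying assignments
  set p : Fin N → (Fin n → ZMod 2) := fun j => (Sf.equivFin.symm j : _) with hpdef
  have hpmem : ∀ j, p j ∈ Sf := fun j => (Sf.equivFin.symm j).2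
  have hpinj : Function.Injective p := fun a b h =>
    Sf.equivFin.symm.injective (Subtype.ext h)
  set e : Fin n → Fin (n + N) := Fin.castAdd N with hedef
  set q : Fin N → Fin (n + N) := Fin.natAdd n with hqdef
  have hqinj : Function.Injective q := by
    intro a b h
    have := congrArg Fin.val h
    simp only [hqdef, Fin.coe_natAdd] at this
    exact Fin.ext (by omega)
  have hqe : ∀ j i, q j ≠ e i := by
    intro j i h
    have := congrArg Fin.val h
    simp only [hqdef, hedef, Fin.coe_natAdd, Fin.coe_castAdd] at this
    have := i.isLt
    omega
  set J : Fin n → Finset (Fin N) := fun i => Finset.univ.filter (fun j => p j i = 1)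
    with hJdef
  -- the clauses of the new formula, indexed by a convenient index type
  set D : ((Fin n ⊕ Fin N × Fin N) ⊕ Unit) →
      Finset ((Fin (n + N) → ZMod 2) → ZMod 2) :=
    Sum.elim
      (Sum.elim
        (fun i => {fun b => b (e i) + ∑ j ∈ J i, b (q j)})
        (fun jj => if jj.1 = jj.2 then {fun _ => (0 : ZMod 2)}
          else {fun b => b (q jj.1), fun b => b (q jj.2)}))
      (fun _ => {fun b => 1 + ∑ j, b (q j)}) with hDdef
  -- structure of satisfying assignments of the new formula
  have hsat : ∀ b : Fin (n + N) → ZMod 2, (∀ x, ∃ ℓ ∈ D x, ℓ b = 0) →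
      ∃ j0 : Fin N, (∀ j, b (q j) = if j = j0 then 1 else 0) ∧ b ∘ e = p j0 := by
    intro b hb
    have hsum : (∑ j, b (q j)) = 1 := by
      obtain ⟨ℓ, hℓ, h0⟩ := hb (Sum.inr ())
      simp only [hDdef, Sum.elim_inr, Finset.mem_singleton] at hℓ
      subst hℓ
      exact (zmod2_eq_of_add_eq_zero _ _ h0).symm
    have hpair : ∀ j j', j ≠ j' → b (q j) = 0 ∨ b (q j') = 0 := by
      intro j j' hne
      obtain ⟨ℓ, hℓ, h0⟩ := hb (Sum.inl (Sum.inr (j, j')))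
      simp only [hDdef, Sum.elim_inl, Sum.elim_inr, hne, if_false,
        Finset.mem_insert, Finset.mem_singleton] at hℓ
      rcases hℓ with h | h
      · subst h; exact Or.inl h0
      · subst h; exact Or.inr h0
    obtain ⟨j0, hj0⟩ : ∃ j0, b (q j0) = 1 := by
      by_contra h
      push_neg at h
      have hz : ∀ j ∈ Finset.univ, b (q j) = 0 :=
        fun j _ => (zmod2_cases _).resolve_right (h j)
      rw [Finset.sum_eq_zero hz] at hsum
      exact one_ne_zero hsum.symm
    have hind : ∀ j, b (q j) = if j = j0 then 1 else 0 := by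
      intro j
      by_cases hj : j = j0
      · simpa [hj] using hj0
      · simp only [hj, if_false]
        rcases hpair j j0 hj with h | h
        · exact h
        · rw [hj0] at h; exact absurd h one_ne_zero
    refine ⟨j0, hind, ?_⟩
    funext i
    obtain ⟨ℓ, hℓ, h0⟩ := hb (Sum.inl (Sum.inl i))
    simp only [hDdef, Sum.elim_inl, Finset.mem_singleton] at hℓ
    subst hℓ
    have hsumJ : (∑ j ∈ J i, b (q j)) = p j0 i := by
      calc ∑ j ∈ J i, b (q j) = ∑ j ∈ J i, (if j = j0 then 1 else 0) :=
            Finset.sum_congr rfl (fun j _ => hind j)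
        _ = if j0 ∈ J i then 1 else 0 := Finset.sum_ite_eq' _ _ _
        _ = p j0 i := by
            simp only [hJdef, Finset.mem_filter, Finset.mem_univ, true_and]
            rcases zmod2_cases (p j0 i) with h | h <;> simp [h]
    have hbe := zmod2_eq_of_add_eq_zero _ _ h0
    show b (e i) = p j0 i
    rw [hbe, hsumJ]
  -- the canonical extension of a satisfying assignment satisfies the new formula
  have hsat' : ∀ j0 : Fin N, ∀ x,
      ∃ ℓ ∈ D x, ℓ (Fin.append (p j0) (fun j => if j = j0 then 1 else 0)) = 0 := by
    intro j0 x
    set b : Fin (n + N) → ZMod 2 :=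
      Fin.append (p j0) (fun j => if j = j0 then 1 else 0) with hbdef
    have hbq : ∀ j, b (q j) = if j = j0 then 1 else 0 := fun j =>
      Fin.append_right _ _ j
    have hbe : ∀ i, b (e i) = p j0 i := fun i => Fin.append_left _ _ i
    have hsumind : ∀ s : Finset (Fin N),
        (∑ j ∈ s, b (q j)) = if j0 ∈ s then 1 else 0 := by
      intro s
      rw [Finset.sum_congr rfl (fun j _ => hbq j), Finset.sum_ite_eq' s j0 (fun _ => 1)]
    match x with
    | Sum.inr _ =>
      refine ⟨_, Finset.mem_singleton_self _, ?_⟩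
      show 1 + (∑ j, b (q j)) = 0
      rw [hsumind, if_pos (Finset.mem_univ _)]
      decide
    | Sum.inl (Sum.inl i) =>
      refine ⟨_, Finset.mem_singleton_self _, ?_⟩
      show b (e i) + ∑ j ∈ J i, b (q j) = 0
      rw [hbe, hsumind]
      have : (if j0 ∈ J i then (1 : ZMod 2) else 0) = p j0 i := by
        simp only [hJdef, Finset.mem_filter, Finset.mem_univ, true_and]
        rcases zmod2_cases (p j0 i) with h | h <;> simp [h]
      rw [this]
      exact zmod2_add_self _
    | Sum.inl (Sum.inr (j, j')) =>
      by_cases h : j = j'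
      · refine ⟨fun _ => 0, ?_, rfl⟩
        simp [hDdef, h]
      · by_cases hj : j = j0
        · refine ⟨fun b => b (q j'), ?_, ?_⟩
          · simp [hDdef, h]
          · show b (q j') = 0
            rw [hbq, if_neg (fun hh => h (hj.trans hh.symm))]
        · refine ⟨fun b => b (q j), ?_, ?_⟩
          · simp [hDdef, h]
          · show b (q j) = 0
            rw [hbq, if_neg hj]
  -- affineness and cardinality of the new clauses
  have hDaff : ∀ x, ∀ ℓ ∈ D x, IsAffine ℓ := by
    rintro ((i' | ⟨j, j'⟩) | u) ℓ hℓ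
    · simp only [hDdef, Sum.elim_inl, Finset.mem_singleton] at hℓ
      subst hℓ
      refine ⟨0, insert (e i') ((J i').image q), ?_⟩
      intro a
      rw [zero_add, Finset.sum_insert, Finset.sum_image
        (fun x _ y _ h => hqinj h)]
      intro hmem
      obtain ⟨j, _, hj⟩ := Finset.mem_image.mp hmem
      exact hqe j i' hj
    · simp only [hDdef, Sum.elim_inl, Sum.elim_inr] at hℓ
      split_ifs at hℓ with h
      · rw [Finset.mem_singleton] at hℓ
        subst hℓ
        exact ⟨0, ∅, fun a => by simp⟩
      · rw [Finset.mem_insert, Finset.mem_singleton] at hℓ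
        rcases hℓ with h' | h' <;> subst h'
        · exact ⟨0, {q j}, fun a => by simp⟩
        · exact ⟨0, {q j'}, fun a => by simp⟩
    · simp only [hDdef, Sum.elim_inr, Finset.mem_singleton] at hℓ
      subst hℓ
      refine ⟨1, Finset.univ.image q, ?_⟩
      intro a
      rw [Finset.sum_image (fun x _ y _ h => hqinj h)]
  have hDcard : ∀ x, (D x).card ≤ 2 := by
    rintro ((i' | ⟨j, j'⟩) | u)
    · simp [hDdef]
    · simp only [hDdef, Sum.elim_inl, Sum.elim_inr]
      split_ifs
      · simp
      · exact (Finset.card_insert_le _ _).trans (by simp)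
    · simp [hDdef]
  -- re-index the clauses by `Fin t`
  set t := Fintype.card ((Fin n ⊕ Fin N × Fin N) ⊕ Unit) with htdef
  set E : Fin t ≃ ((Fin n ⊕ Fin N × Fin N) ⊕ Unit) := (Fintype.equivFin _).symm
    with hEdef
  refine ⟨N, t, fun i => D (E i), fun i => hDaff (E i), fun i => hDcard (E i), ?_⟩
  -- the bijection
  have hTeq : {b : Fin (n + N) → ZMod 2 | ∀ i, ∃ ℓ ∈ D (E i), ℓ b = 0} =
      {b : Fin (n + N) → ZMod 2 | ∀ x, ∃ ℓ ∈ D x, ℓ b = 0} := by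
    ext b
    simp only [Set.mem_setOf_eq]
    constructor
    · intro h x
      have := h (E.symm x)
      rwa [E.apply_symm_apply] at this
    · intro h i
      exact h (E i)
  rw [hTeq]
  have hmemS : ∀ a, a ∈ Sf ↔ a ∈ {a : Fin n → ZMod 2 | ∀ k, ∃ ℓ ∈ C k, ℓ a = 0} := by
    intro a
    simp [hSf, Set.mem_setOf_eq]
  refine ⟨?_, ?_, ?_⟩
  · -- MapsTo
    intro b hb
    obtain ⟨j0, _, hbe⟩ := hsat b hb
    show b ∘ e ∈ _
    rw [hbe]
    exact (hmemS _).mp (hpmem j0)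
  · -- InjOn
    intro b hb b' hb' hπ
    obtain ⟨j0, hind, hbe⟩ := hsat b hb
    obtain ⟨j0', hind', hbe'⟩ := hsat b' hb'
    have hpp : p j0 = p j0' := by
      rw [← hbe, ← hbe']
      exact hπ
    have hj : j0 = j0' := hpinj hpp
    funext x
    refine Fin.addCases (motive := fun x => b x = b' x) (fun i => ?_) (fun j => ?_) x
    · show b (e i) = b' (e i)
      have h1 := congrFun hbe i
      have h2 := congrFun hbe' i
      simp only [Function.comp_apply] at h1 h2
      rw [h1, h2, hj]
    · show b (q j) = b' (q j)
      rw [hind j, hind' j, hj]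
  · -- SurjOn
    intro a ha
    have haSf : a ∈ Sf := (hmemS a).mpr ha
    set j0 : Fin N := Sf.equivFin ⟨a, haSf⟩ with hj0def
    have hpj0 : p j0 = a := by
      simp only [hpdef, hj0def, Equiv.symm_apply_apply]
    refine ⟨Fin.append (p j0) (fun j => if j = j0 then 1 else 0), hsat' j0, ?_⟩
    show Fin.append (p j0) _ ∘ e = a
    funext i
    show Fin.append (p j0) _ (e i) = a i
    rw [show e i = Fin.castAdd N i from rfl, Fin.append_left, hpj0]
end

section
/- Let n, r ∈ ℕ, let k ≥ 2, and for each i ∈ Fin r let C_i be a finite set of at most k affine functions on (Fin n → ZMod 2); define S(F) = {a : Fin n → ZMod 2 | ∀ i, ∃ ℓ ∈ C_i, ℓ a = 0}. Then there exist m ≤ r·(k−2), t ≤ r + 2·r·(k−2), and finite sets C'_1, …, C'_t of affine functions on (Fin (n+m) → ZMod 2), each of cardinality at most 2, such that S(F) ≡_n S(G) where S(G) = {b | ∀ i, ∃ ℓ ∈ C'_i, ℓ b = 0}. (A k-XNF formula with r clauses converts to 2-XNF with at most r(k−2) new variables and 2r(k−2) new clauses.) -/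
/-- closure of affine under addition -/
lemma IsAffine.add {n : ℕ} {f g : (Fin n → ZMod 2) → ZMod 2}
    (hf : IsAffine f) (hg : IsAffine g) : IsAffine (f + g) := by
  obtain ⟨c, A, hA⟩ := hf
  obtain ⟨d, B, hB⟩ := hg
  refine ⟨c + d, symmDiff A B, fun a => ?_⟩
  have h1 : ∑ i ∈ A ∪ B, a i + ∑ i ∈ A ∩ B, a i = ∑ i ∈ A, a i + ∑ i ∈ B, a i :=
    Finset.sum_union_inter
  have h2 : ∑ i ∈ (A ∪ B) \ (A ∩ B), a i + ∑ i ∈ A ∩ B, a i = ∑ i ∈ A ∪ B, a i :=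
    Finset.sum_sdiff (Finset.inter_subset_union)
  have hsd : symmDiff A B = (A ∪ B) \ (A ∩ B) := by
    ext x; simp [Finset.mem_symmDiff, Finset.mem_sdiff, Finset.mem_union, Finset.mem_inter]
    tauto
  have hchar : ∀ x : ZMod 2, x + x = 0 := by decide
  have := hA a; have := hB a
  simp only [Pi.add_apply, hA a, hB a, hsd]
  have : ∑ i ∈ (A ∪ B) \ (A ∩ B), a i = ∑ i ∈ A, a i + ∑ i ∈ B, a i := by
    have := h1; have := h2
    -- from h2: sdiff = union - inter ; char 2
    have two : (2:ZMod 2) = 0 := rfl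
    linear_combination h1 + h2 - (∑ i ∈ A ∩ B, a i) * two
  rw [this]; ring

lemma IsAffine.const {n : ℕ} (c : ZMod 2) : IsAffine (fun _ : Fin n → ZMod 2 => c) :=
  ⟨c, ∅, by simp⟩

lemma IsAffine.zero {n : ℕ} : IsAffine (0 : (Fin n → ZMod 2) → ZMod 2) :=
  ⟨0, ∅, by simp⟩

lemma IsAffine.proj {n : ℕ} (x : Fin n) : IsAffine (fun b : Fin n → ZMod 2 => b x) :=
  ⟨0, {x}, by simp⟩

lemma IsAffine.comp_cast {n m : ℕ} {ℓ : (Fin n → ZMod 2) → ZMod 2} (h : IsAffine ℓ) :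
    IsAffine (fun b : Fin (n + m) → ZMod 2 => ℓ (b ∘ Fin.castAdd m)) := by
  obtain ⟨c, A, hA⟩ := h
  refine ⟨c, A.image (Fin.castAdd m), fun b => ?_⟩
  show ℓ (b ∘ Fin.castAdd m) = _
  rw [hA, Finset.sum_image (by intro x _ y _ h; exact Fin.castAdd_injective _ _ h)]
  rfl



namespace KXNF

lemma zmod2_cases (x : ZMod 2) : x = 0 ∨ x = 1 := by revert x; decide

lemma zmod2_add_self (x : ZMod 2) : x + x = 0 := by revert x; decide

lemma zmod2_add_eq_zero {x y : ZMod 2} (h : x + y = 0) : x = y := by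
  revert h; revert x y; decide

lemma zmod2_one_ne_zero : (1 : ZMod 2) ≠ 0 := by decide

section Main

variable (n r k : ℕ) (C : Fin r → Finset ((Fin n → ZMod 2) → ZMod 2))

/-- index of the `j`-th new variable for clause `i` -/
def nu (i : Fin r) (j : Fin (k - 2)) : Fin (n + r * (k - 2)) :=
  Fin.natAdd n (finProdFinEquiv (i, j))

/-- the `idx`-th literal of clause `i`, transported to the extended variables -/
noncomputable def lit (i : Fin r) (idx : ℕ) : (Fin (n + r * (k - 2)) → ZMod 2) → ZMod 2 :=
  fun b => ((C i).toList.getD idx 0) (b ∘ Fin.castAdd (r * (k - 2)))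

/-- the function reading the `j`-th new variable of clause `i` (0 if out of range) -/
def Yn (i : Fin r) (jn : ℕ) : (Fin (n + r * (k - 2)) → ZMod 2) → ZMod 2 :=
  if h : jn < k - 2 then (fun b => b (nu n r k i ⟨jn, h⟩)) else 0

/-- previous chain value -/
noncomputable def Pprev (i : Fin r) (jn : ℕ) : (Fin (n + r * (k - 2)) → ZMod 2) → ZMod 2 :=
  if jn = 0 then lit n r k C i 0 else Yn n r k i (jn - 1)

/-- intended value of the `j`-th new variable of clause `i`: product of the first
`j+2` literal values -/
noncomputable def yv (a : Fin n → ZMod 2) (i : Fin r) (jn : ℕ) : ZMod 2 :=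
  (((C i).toList.take (jn + 2)).map (fun ℓ => ℓ a)).prod

/-- the canonical extension of an assignment -/
noncomputable def ext (a : Fin n → ZMod 2) : Fin (n + r * (k - 2)) → ZMod 2 :=
  Fin.addCases (motive := fun _ => ZMod 2) a
    (fun q => yv n r C a (finProdFinEquiv.symm q).1 (finProdFinEquiv.symm q).2)

/-- the final clause for clause `i` -/
noncomputable def final (i : Fin r) : Finset ((Fin (n + r * (k - 2)) → ZMod 2) → ZMod 2) :=
  if (C i).card = 0 then {(1 : (Fin (n + r * (k - 2)) → ZMod 2) → ZMod 2)}
  else if (C i).card ≤ 2 then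
    (C i).image (fun ℓ => fun b => ℓ (b ∘ Fin.castAdd (r * (k - 2))))
  else {Yn n r k i ((C i).card - 3), lit n r k C i ((C i).card - 1)}

/-- all new clauses, indexed -/
noncomputable def clauseAt : Fin r × Option (Fin (k - 2) × Bool) →
    Finset ((Fin (n + r * (k - 2)) → ZMod 2) → ZMod 2)
  | (i, none) => final n r k C i
  | (i, some (j, false)) =>
      if (j : ℕ) < (C i).card - 2 then
        {Yn n r k i j, Pprev n r k C i j + 1}
      else {Yn n r k i j}
  | (i, some (j, true)) =>
      if (j : ℕ) < (C i).card - 2 then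
        {Yn n r k i j + lit n r k C i ((j : ℕ) + 1), Pprev n r k C i j}
      else {0}


lemma ext_cast (a : Fin n → ZMod 2) (p : Fin n) :
    ext n r k C a (Fin.castAdd (r * (k - 2)) p) = a p := by
  unfold ext; rw [Fin.addCases_left]

lemma comp_ext (a : Fin n → ZMod 2) :
    (ext n r k C a) ∘ Fin.castAdd (r * (k - 2)) = a :=
  funext (ext_cast n r k C a)

lemma ext_nu (a : Fin n → ZMod 2) (i : Fin r) (j : Fin (k - 2)) :
    ext n r k C a (nu n r k i j) = yv n r C a i j := by
  unfold ext nu; rw [Fin.addCases_right]; simp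

lemma Yn_ext (a : Fin n → ZMod 2) (i : Fin r) (jn : ℕ) (h : jn < k - 2) :
    Yn n r k i jn (ext n r k C a) = yv n r C a i jn := by
  unfold Yn; rw [dif_pos h]; exact ext_nu n r k C a i ⟨jn, h⟩

lemma lit_ext (a : Fin n → ZMod 2) (i : Fin r) (idx : ℕ) :
    lit n r k C i idx (ext n r k C a) = ((C i).toList.getD idx 0) a := by
  unfold lit; rw [comp_ext]

lemma yv_zero (a : Fin n → ZMod 2) (i : Fin r) (h : 2 ≤ (C i).card) :
    yv n r C a i 0 = ((C i).toList.getD 0 0) a * ((C i).toList.getD 1 0) a := by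
  unfold yv
  have hl := Finset.length_toList (C i)
  have g0 : 0 < (C i).toList.length := by omega
  have g1 : 1 < (C i).toList.length := by omega
  have h1 : 1 < ((C i).toList.map (· a)).length := by rw [List.length_map]; exact g1
  have h0 : 0 < ((C i).toList.map (· a)).length := by rw [List.length_map]; exact g0
  rw [List.map_take]
  rw [show (List.take (0+2) ((C i).toList.map (· a))).prod
      = (List.take (1+1) ((C i).toList.map (· a))).prod from rfl]
  rw [List.prod_take_succ _ 1 h1]
  rw [show (List.take 1 ((C i).toList.map (· a))).prod
      = (List.take (0+1) ((C i).toList.map (· a))).prod from rfl]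
  rw [List.prod_take_succ _ 0 h0]
  rw [List.getD_eq_getElem _ _ g0, List.getD_eq_getElem _ _ g1]
  simp

lemma yv_succ (a : Fin n → ZMod 2) (i : Fin r) (jn : ℕ) (h : jn + 2 < (C i).card) :
    yv n r C a i (jn + 1) = yv n r C a i jn * ((C i).toList.getD (jn + 2) 0) a := by
  unfold yv
  have hl := Finset.length_toList (C i)
  have g2 : jn + 2 < (C i).toList.length := by omega
  have h2 : jn + 2 < ((C i).toList.map (· a)).length := by
    rw [List.length_map]; exact g2
  rw [List.map_take, List.map_take,
    show (List.take (jn+1+2) ((C i).toList.map (· a))).prod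
      = (List.take ((jn+2)+1) ((C i).toList.map (· a))).prod from rfl,
    List.prod_take_succ _ _ h2]
  rw [List.getD_eq_getElem _ _ g2, List.getElem_map]

lemma yv_full (a : Fin n → ZMod 2) (i : Fin r) (jn : ℕ) (h : (C i).card ≤ jn + 2) :
    yv n r C a i jn = ((C i).toList.map (· a)).prod := by
  unfold yv
  rw [List.take_of_length_le (by rw [Finset.length_toList]; omega)]

lemma full_prod_eq_zero (a : Fin n → ZMod 2) (i : Fin r) :
    ((C i).toList.map (· a)).prod = 0 ↔ ∃ ℓ ∈ C i, ℓ a = 0 := by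
  rw [List.prod_eq_zero_iff]
  constructor
  · intro h
    obtain ⟨ℓ, hm, he⟩ := List.mem_map.mp h
    exact ⟨ℓ, Finset.mem_toList.mp hm, he⟩
  · rintro ⟨ℓ, hm, he⟩
    exact List.mem_map.mpr ⟨ℓ, Finset.mem_toList.mpr hm, he⟩

lemma yv_last (a : Fin n → ZMod 2) (i : Fin r) (h : 3 ≤ (C i).card) :
    yv n r C a i ((C i).card - 3) * ((C i).toList.getD ((C i).card - 1) 0) a
      = ((C i).toList.map (· a)).prod := by
  have hl := Finset.length_toList (C i)
  have g1 : (C i).card - 1 < (C i).toList.length := by omega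
  have harith : (C i).card - 3 + 2 = (C i).card - 1 := by omega
  have hle : ((C i).toList.map (· a)).length ≤ (C i).card - 1 + 1 := by
    rw [List.length_map]; omega
  have h1 : (C i).card - 1 < ((C i).toList.map (· a)).length := by
    rw [List.length_map]; exact g1
  have e := List.prod_take_succ ((C i).toList.map (· a)) ((C i).card - 1) h1
  rw [List.take_of_length_le hle] at e
  unfold yv
  rw [List.map_take, harith, e]
  rw [List.getD_eq_getElem _ _ g1, List.getElem_map]


lemma Pprev_ext (a : Fin n → ZMod 2) (i : Fin r) (jn : ℕ) (hjn : jn < k - 2) :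
    Pprev n r k C i jn (ext n r k C a) =
      if jn = 0 then ((C i).toList.getD 0 0) a else yv n r C a i (jn - 1) := by
  unfold Pprev
  by_cases h : jn = 0
  · simp only [h, if_true, if_pos]
    exact lit_ext n r k C a i 0
  · simp only [h, if_false]
    exact Yn_ext n r k C a i (jn - 1) (by omega)

lemma yv_step (a : Fin n → ZMod 2) (i : Fin r) (jn : ℕ) (h3 : jn < (C i).card - 2) :
    yv n r C a i jn =
      (if jn = 0 then ((C i).toList.getD 0 0) a else yv n r C a i (jn - 1)) *
        ((C i).toList.getD (jn + 1) 0) a := by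
  cases jn with
  | zero => simpa using yv_zero n r C a i (by omega)
  | succ m =>
    simp only [Nat.succ_ne_zero, if_false, Nat.add_sub_cancel]
    exact yv_succ n r C a i m (by omega)


lemma clause_sound (hk : 2 ≤ k) (a : Fin n → ZMod 2) (i : Fin r)
    (hCk : (C i).card ≤ k) (ha : ∃ ℓ ∈ C i, ℓ a = 0)
    (o : Option (Fin (k - 2) × Bool)) :
    ∃ ℓ ∈ clauseAt n r k C (i, o), ℓ (ext n r k C a) = 0 := by
  have hfull : ((C i).toList.map (· a)).prod = 0 := (full_prod_eq_zero n r C a i).mpr ha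
  have hcard0 : (C i).card ≠ 0 := by
    obtain ⟨ℓ, hm, _⟩ := ha
    exact Finset.card_ne_zero_of_mem hm
  match o with
  | none =>
    show ∃ ℓ ∈ final n r k C i, ℓ (ext n r k C a) = 0
    unfold final
    rw [if_neg hcard0]
    by_cases h2 : (C i).card ≤ 2
    · rw [if_pos h2]
      obtain ⟨ℓ, hm, hz⟩ := ha
      refine ⟨_, Finset.mem_image_of_mem _ hm, ?_⟩
      rw [comp_ext]; exact hz
    · rw [if_neg h2]
      have h3 : 3 ≤ (C i).card := by omega
      have hlt : (C i).card - 3 < k - 2 := by omega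
      have hY := Yn_ext n r k C a i ((C i).card - 3) hlt
      have hlast := yv_last n r C a i h3
      rw [hfull] at hlast
      rcases mul_eq_zero.mp hlast with hz | hz
      · exact ⟨_, Finset.mem_insert_self _ _, by rw [hY]; exact hz⟩
      · refine ⟨_, Finset.mem_insert_of_mem (Finset.mem_singleton_self _), ?_⟩
        rw [lit_ext]; exact hz
  | some (j, false) =>
    show ∃ ℓ ∈ (if (j : ℕ) < (C i).card - 2 then
        ({Yn n r k i j, Pprev n r k C i j + 1} :
          Finset ((Fin (n + r * (k - 2)) → ZMod 2) → ZMod 2))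
      else {Yn n r k i j}), ℓ (ext n r k C a) = 0
    by_cases hc : (j : ℕ) < (C i).card - 2
    · rw [if_pos hc]
      have hstep := yv_step n r C a i j hc
      have hprev := Pprev_ext n r k C a i j j.isLt
      rcases zmod2_cases (if (j : ℕ) = 0 then ((C i).toList.getD 0 0) a
          else yv n r C a i ((j : ℕ) - 1)) with hp | hp
      · refine ⟨_, Finset.mem_insert_self _ _, ?_⟩
        rw [Yn_ext n r k C a i j j.isLt, hstep, hp, zero_mul]
      · refine ⟨_, Finset.mem_insert_of_mem (Finset.mem_singleton_self _), ?_⟩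
        have : (Pprev n r k C i j + 1) (ext n r k C a)
            = Pprev n r k C i j (ext n r k C a) + 1 := rfl
        rw [this, hprev, hp]
        exact zmod2_add_self 1
    · rw [if_neg hc]
      refine ⟨_, Finset.mem_singleton_self _, ?_⟩
      rw [Yn_ext n r k C a i j j.isLt, yv_full n r C a i j (by omega)]
      exact hfull
  | some (j, true) =>
    show ∃ ℓ ∈ (if (j : ℕ) < (C i).card - 2 then
        ({Yn n r k i j + lit n r k C i ((j : ℕ) + 1), Pprev n r k C i j} :
          Finset ((Fin (n + r * (k - 2)) → ZMod 2) → ZMod 2))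
      else {0}), ℓ (ext n r k C a) = 0
    by_cases hc : (j : ℕ) < (C i).card - 2
    · rw [if_pos hc]
      have hstep := yv_step n r C a i j hc
      have hprev := Pprev_ext n r k C a i j j.isLt
      rcases zmod2_cases (if (j : ℕ) = 0 then ((C i).toList.getD 0 0) a
          else yv n r C a i ((j : ℕ) - 1)) with hp | hp
      · refine ⟨_, Finset.mem_insert_of_mem (Finset.mem_singleton_self _), ?_⟩
        rw [hprev, hp]
      · refine ⟨_, Finset.mem_insert_self _ _, ?_⟩
        have : (Yn n r k i j + lit n r k C i ((j : ℕ) + 1)) (ext n r k C a)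
            = Yn n r k i j (ext n r k C a) + lit n r k C i ((j : ℕ) + 1) (ext n r k C a) := rfl
        rw [this, Yn_ext n r k C a i j j.isLt, lit_ext, hstep, hp, one_mul]
        exact zmod2_add_self _
    · rw [if_neg hc]
      exact ⟨0, Finset.mem_singleton_self _, rfl⟩


lemma lit_apply (b : Fin (n + r * (k - 2)) → ZMod 2) (i : Fin r) (idx : ℕ) :
    lit n r k C i idx b = ((C i).toList.getD idx 0) (b ∘ Fin.castAdd (r * (k - 2))) := rfl

lemma Yn_apply (b : Fin (n + r * (k - 2)) → ZMod 2) (i : Fin r) (j : Fin (k - 2)) :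
    Yn n r k i (j : ℕ) b = b (nu n r k i j) := by
  unfold Yn; rw [dif_pos j.isLt]

lemma clause_complete (b : Fin (n + r * (k - 2)) → ZMod 2) (i : Fin r)
    (hCk : (C i).card ≤ k)
    (hb : ∀ o, ∃ ℓ ∈ clauseAt n r k C (i, o), ℓ b = 0) :
    (∃ ℓ ∈ C i, ℓ (b ∘ Fin.castAdd (r * (k - 2))) = 0) ∧
      ∀ j : Fin (k - 2), b (nu n r k i j) =
        yv n r C (b ∘ Fin.castAdd (r * (k - 2))) i (j : ℕ) := by
  set a := b ∘ Fin.castAdd (r * (k - 2)) with ha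
  -- Step 1 : chain values
  have chain : ∀ jn : ℕ, ∀ hjn : jn < k - 2, jn < (C i).card - 2 →
      b (nu n r k i ⟨jn, hjn⟩) = yv n r C a i jn := by
    intro jn
    induction jn using Nat.strong_induction_on with
    | _ jn IH =>
      intro hjn hc
      have hfalse := hb (some (⟨jn, hjn⟩, false))
      have htrue := hb (some (⟨jn, hjn⟩, true))
      simp only [clauseAt, if_pos hc] at hfalse htrue
      -- value of Pprev at b
      have hprev : Pprev n r k C i jn b =
          (if jn = 0 then ((C i).toList.getD 0 0) a else yv n r C a i (jn - 1)) := by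
        unfold Pprev
        by_cases h0 : jn = 0
        · simp only [h0, if_true]; rfl
        · simp only [h0, if_false]
          unfold Yn
          rw [dif_pos (by omega : jn - 1 < k - 2)]
          have := IH (jn - 1) (by omega) (by omega : jn - 1 < k - 2) (by omega)
          convert this using 3
      set pv := (if jn = 0 then ((C i).toList.getD 0 0) a else yv n r C a i (jn - 1))
        with hpv
      have hstep := yv_step n r C a i jn hc
      rw [← hpv] at hstep
      rcases zmod2_cases pv with hp | hp
      · -- pv = 0 : from false clause, b (nu) = 0
        rw [hstep, hp, zero_mul]
        rcases hfalse with ⟨ℓ, hm, hz⟩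
        rcases Finset.mem_insert.mp hm with rfl | hm
        · unfold Yn at hz
          rw [dif_pos hjn] at hz
          exact hz
        · rw [Finset.mem_singleton.mp hm] at hz
          exfalso
          have : Pprev n r k C i jn b + 1 = 0 := hz
          rw [hprev, hp, zero_add] at this
          exact zmod2_one_ne_zero this
      · -- pv = 1 : from true clause, b (nu) = next literal value
        rw [hstep, hp, one_mul]
        rcases htrue with ⟨ℓ, hm, hz⟩
        rcases Finset.mem_insert.mp hm with rfl | hm
        · have : Yn n r k i jn b + lit n r k C i (jn + 1) b = 0 := hz
          rw [Yn_apply n r k b i ⟨jn, hjn⟩] at this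
          have := zmod2_add_eq_zero this
          rw [this, lit_apply]
        · rw [Finset.mem_singleton.mp hm] at hz
          exfalso
          have : Pprev n r k C i jn b = 0 := hz
          rw [hprev, hp] at this
          exact zmod2_one_ne_zero this
  -- Step 2 : the original clause is satisfied
  have hsat : ∃ ℓ ∈ C i, ℓ a = 0 := by
    have hfin := hb none
    simp only [clauseAt] at hfin
    unfold final at hfin
    by_cases h0 : (C i).card = 0
    · rw [if_pos h0] at hfin
      rcases hfin with ⟨ℓ, hm, hz⟩
      rw [Finset.mem_singleton.mp hm] at hz
      exact absurd hz zmod2_one_ne_zero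
    · rw [if_neg h0] at hfin
      by_cases h2 : (C i).card ≤ 2
      · rw [if_pos h2] at hfin
        rcases hfin with ⟨ℓ, hm, hz⟩
        rcases Finset.mem_image.mp hm with ⟨ℓ₀, hm₀, rfl⟩
        exact ⟨ℓ₀, hm₀, hz⟩
      · rw [if_neg h2] at hfin
        have h3 : 3 ≤ (C i).card := by omega
        rw [← full_prod_eq_zero, ← yv_last n r C a i h3]
        rcases hfin with ⟨ℓ, hm, hz⟩
        rcases Finset.mem_insert.mp hm with rfl | hm
        · -- Yn value is zero
          have hk2 : (C i).card - 3 < k - 2 := by omega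
          have := chain ((C i).card - 3) hk2 (by omega)
          unfold Yn at hz
          rw [dif_pos hk2] at hz
          rw [this] at hz
          rw [hz, zero_mul]
        · rw [Finset.mem_singleton.mp hm] at hz
          rw [lit_apply] at hz
          rw [hz, mul_zero]
  refine ⟨hsat, fun j => ?_⟩
  by_cases hc : (j : ℕ) < (C i).card - 2
  · have := chain (j : ℕ) j.isLt hc
    simpa using this
  · -- pinned variable
    have hfalse := hb (some (j, false))
    simp only [clauseAt, if_neg hc] at hfalse
    rcases hfalse with ⟨ℓ, hm, hz⟩
    rw [Finset.mem_singleton.mp hm] at hz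
    rw [Yn_apply] at hz
    rw [hz, yv_full n r C a i (j : ℕ) (by omega)]
    exact ((full_prod_eq_zero n r C a i).mpr hsat).symm


lemma Yn_affine (i : Fin r) (jn : ℕ) : IsAffine (Yn n r k i jn) := by
  unfold Yn; split
  · exact IsAffine.proj _
  · exact IsAffine.zero

lemma one_affine : IsAffine (1 : (Fin (n + r * (k - 2)) → ZMod 2) → ZMod 2) :=
  ⟨1, ∅, by simp⟩

lemma lit_affine (hC : ∀ i, ∀ ℓ ∈ C i, IsAffine ℓ) (i : Fin r) (idx : ℕ) :
    IsAffine (lit n r k C i idx) := by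
  by_cases h : idx < (C i).toList.length
  · have hm : (C i).toList.getD idx 0 ∈ C i := by
      rw [List.getD_eq_getElem _ _ h]
      exact Finset.mem_toList.mp (List.getElem_mem _)
    exact (hC i _ hm).comp_cast
  · have h0 : (C i).toList.getD idx 0 = 0 := List.getD_eq_default _ _ (by omega)
    unfold lit; rw [h0]
    exact ⟨0, ∅, by simp⟩

lemma Pprev_affine (hC : ∀ i, ∀ ℓ ∈ C i, IsAffine ℓ) (i : Fin r) (jn : ℕ) :
    IsAffine (Pprev n r k C i jn) := by
  unfold Pprev; split
  · exact lit_affine n r k C hC i 0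
  · exact Yn_affine n r k i (jn - 1)

lemma clauseAt_affine (hC : ∀ i, ∀ ℓ ∈ C i, IsAffine ℓ)
    (x : Fin r × Option (Fin (k - 2) × Bool)) :
    ∀ ℓ ∈ clauseAt n r k C x, IsAffine ℓ := by
  obtain ⟨i, o⟩ := x
  match o with
  | none =>
    intro ℓ hm
    simp only [clauseAt] at hm
    unfold final at hm
    split at hm
    · rw [Finset.mem_singleton.mp hm]; exact one_affine n r k
    · split at hm
      · rcases Finset.mem_image.mp hm with ⟨ℓ₀, hm₀, rfl⟩
        exact (hC i ℓ₀ hm₀).comp_cast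
      · rcases Finset.mem_insert.mp hm with rfl | hm
        · exact Yn_affine n r k i _
        · rw [Finset.mem_singleton.mp hm]; exact lit_affine n r k C hC i _
  | some (j, false) =>
    intro ℓ hm
    simp only [clauseAt] at hm
    split at hm
    · rcases Finset.mem_insert.mp hm with rfl | hm
      · exact Yn_affine n r k i _
      · rw [Finset.mem_singleton.mp hm]
        exact (Pprev_affine n r k C hC i _).add (one_affine n r k)
    · rw [Finset.mem_singleton.mp hm]; exact Yn_affine n r k i _
  | some (j, true) =>
    intro ℓ hm
    simp only [clauseAt] at hm
    split at hm
    · rcases Finset.mem_insert.mp hm with rfl | hm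
      · exact (Yn_affine n r k i _).add (lit_affine n r k C hC i _)
      · rw [Finset.mem_singleton.mp hm]; exact Pprev_affine n r k C hC i _
    · rw [Finset.mem_singleton.mp hm]; exact IsAffine.zero

lemma clauseAt_card (hCk : ∀ i, (C i).card ≤ k)
    (x : Fin r × Option (Fin (k - 2) × Bool)) :
    (clauseAt n r k C x).card ≤ 2 := by
  obtain ⟨i, o⟩ := x
  match o with
  | none =>
    simp only [clauseAt]
    unfold final
    split
    · simp
    · split
      · next h2 => exact (Finset.card_image_le).trans h2
      · exact (Finset.card_insert_le _ _).trans (by simp)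
  | some (j, false) =>
    simp only [clauseAt]
    split
    · exact (Finset.card_insert_le _ _).trans (by simp)
    · simp
  | some (j, true) =>
    simp only [clauseAt]
    split
    · exact (Finset.card_insert_le _ _).trans (by simp)
    · simp

lemma eq_ext (hCk : ∀ i, (C i).card ≤ k) (b : Fin (n + r * (k - 2)) → ZMod 2)
    (hb : ∀ x, ∃ ℓ ∈ clauseAt n r k C x, ℓ b = 0) :
    b = ext n r k C (b ∘ Fin.castAdd (r * (k - 2))) := by
  funext x
  refine Fin.addCases
    (motive := fun x => b x = ext n r k C (b ∘ Fin.castAdd (r * (k - 2))) x) ?_ ?_ x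
  · intro p; rw [ext_cast]; rfl
  · intro q
    unfold ext
    rw [Fin.addCases_right]
    have key := (clause_complete n r k C b (finProdFinEquiv.symm q).1
      (hCk _) (fun o => hb _)).2 (finProdFinEquiv.symm q).2
    have hq : nu n r k (finProdFinEquiv.symm q).1 (finProdFinEquiv.symm q).2
        = Fin.natAdd n q := by
      unfold nu
      rw [show ((finProdFinEquiv.symm q).1, (finProdFinEquiv.symm q).2)
          = finProdFinEquiv.symm q from rfl]
      rw [Equiv.apply_symm_apply]
    rw [← hq]
    exact key

end Main

end KXNF

open KXNF in
/-- A `k`-XNF formula with `r` clauses converts to an equisatisfiable 2-XNF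
formula using at most `r * (k - 2)` new variables and `2 * r * (k - 2)` new
clauses. -/
theorem kxnf_to_two_xnf_bounds (n r k : ℕ) (hk : 2 ≤ k)
    (C : Fin r → Finset ((Fin n → ZMod 2) → ZMod 2))
    (hC : ∀ i, ∀ ℓ ∈ C i, IsAffine ℓ)
    (hCk : ∀ i, (C i).card ≤ k) :
    ∃ (m t : ℕ), m ≤ r * (k - 2) ∧ t ≤ r + 2 * r * (k - 2) ∧
      ∃ C' : Fin t → Finset ((Fin (n + m) → ZMod 2) → ZMod 2),
        (∀ i, ∀ ℓ ∈ C' i, IsAffine ℓ) ∧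
        (∀ i, (C' i).card ≤ 2) ∧
        Set.BijOn (fun b => b ∘ Fin.castAdd m)
          {b : Fin (n + m) → ZMod 2 | ∀ i, ∃ ℓ ∈ C' i, ℓ b = 0}
          {a : Fin n → ZMod 2 | ∀ i, ∃ ℓ ∈ C i, ℓ a = 0} := by
  classical
  refine ⟨r * (k - 2), r * (2 * (k - 2) + 1), le_rfl, le_of_eq (by ring), ?_⟩
  have hcard : Fintype.card (Fin r × Option (Fin (k - 2) × Bool))
      = r * (2 * (k - 2) + 1) := by
    simp only [Fintype.card_prod, Fintype.card_option, Fintype.card_fin,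
      Fintype.card_bool]
    ring
  let e : (Fin r × Option (Fin (k - 2) × Bool)) ≃ Fin (r * (2 * (k - 2) + 1)) :=
    Fintype.equivFinOfCardEq hcard
  refine ⟨fun q => clauseAt n r k C (e.symm q), ?_, ?_, ?_⟩
  · exact fun q => clauseAt_affine n r k C hC (e.symm q)
  · exact fun q => clauseAt_card n r k C hCk (e.symm q)
  · have hSG : ∀ b : Fin (n + r * (k - 2)) → ZMod 2,
        (∀ q, ∃ ℓ ∈ clauseAt n r k C (e.symm q), ℓ b = 0) ↔
        (∀ x, ∃ ℓ ∈ clauseAt n r k C x, ℓ b = 0) := by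
      intro b
      constructor
      · intro h x
        have := h (e x)
        rwa [Equiv.symm_apply_apply] at this
      · intro h q
        exact h _
    refine ⟨?_, ?_, ?_⟩
    · intro b hb
      intro i
      exact (clause_complete n r k C b i (hCk i)
        (fun o => (hSG b).mp hb (i, o))).1
    · intro b1 h1 b2 h2 hpi
      have e1 := eq_ext n r k C hCk b1 ((hSG b1).mp h1)
      have e2 := eq_ext n r k C hCk b2 ((hSG b2).mp h2)
      rw [e1, e2]
      simp only at hpi
      rw [hpi]
    · intro a ha
      refine ⟨ext n r k C a, ?_, comp_ext n r k C a⟩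
      rw [Set.mem_setOf_eq, hSG]
      rintro ⟨i, o⟩
      exact clause_sound n r k C hk a i (hCk i) (ha i) o
end

section
/- For every n ∈ ℕ and every subset Z ⊆ (Fin n → ZMod 2) (equivalently, the zero set of an arbitrary ideal of the ring of Boolean polynomials in n variables, identified with R_n), there exist m ∈ ℕ, finitely many pairs (f_1, g_1), …, (f_k, g_k) of affine functions on (Fin (n+m) → ZMod 2), and finitely many affine functions ℓ_1, …, ℓ_s on (Fin (n+m) → ZMod 2), such that Z ≡_n Z({f_i * g_i | 1 ≤ i ≤ k} ∪ {ℓ_j | 1 ≤ j ≤ s}), i.e., the projection π restricts to a bijection from the common zero set of the products f_i·g_i and the ℓ_j onto Z. (Every ideal of the Boolean polynomial ring has a 2-XNF representation.) -/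
open Finset

namespace TwoXNFAux

variable (n : ℕ)

/-- number of extra variables: one per assignment -/
abbrev M : ℕ := Fintype.card (Fin n → ZMod 2)

noncomputable def E : (Fin n → ZMod 2) ≃ Fin (M n) := Fintype.equivFin _

/-- index of the extra variable attached to assignment `a` -/
noncomputable def idx (a : Fin n → ZMod 2) : Fin (n + M n) := Fin.natAdd n (E n a)

lemma idx_injective : Function.Injective (idx n) := by
  intro a a' h
  apply (E n).injective
  have := congrArg Fin.val h
  simp only [idx, Fin.natAdd] at this
  exact Fin.ext (by omega)

lemma castAdd_ne_idx (i : Fin n) (a : Fin n → ZMod 2) :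
    Fin.castAdd (M n) i ≠ idx n a := by
  intro h
  have := congrArg Fin.val h
  simp only [idx, Fin.coe_castAdd, Fin.natAdd] at this
  omega

/-- the canonical lift of an assignment `z` -/
noncomputable def lift (z : Fin n → ZMod 2) : Fin (n + M n) → ZMod 2 :=
  Fin.append z (fun p => if p = E n z then 1 else 0)

lemma lift_castAdd (z : Fin n → ZMod 2) (i : Fin n) :
    lift n z (Fin.castAdd (M n) i) = z i := Fin.append_left _ _ _

lemma lift_idx (z a : Fin n → ZMod 2) :
    lift n z (idx n a) = if a = z then 1 else 0 := by
  simp only [lift, idx, Fin.append_right, EmbeddingLike.apply_eq_iff_eq]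

lemma lift_natAdd (z : Fin n → ZMod 2) (p : Fin (M n)) :
    lift n z (Fin.natAdd n p) = if p = E n z then 1 else 0 := Fin.append_right _ _ _

/-- the quadratic-constraint factors -/
noncomputable def Fq (a a' : Fin n → ZMod 2) : (Fin (n + M n) → ZMod 2) → ZMod 2 :=
  if a = a' then 0 else fun b => b (idx n a)

/-- index type for the linear constraints -/
abbrev J := Option (Fin n ⊕ (Fin n → ZMod 2))

open Classical in
/-- the linear constraints -/
noncomputable def L (Z : Set (Fin n → ZMod 2)) : J n → (Fin (n + M n) → ZMod 2) → ZMod 2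
  | none => fun b => 1 + ∑ a : Fin n → ZMod 2, b (idx n a)
  | some (.inl i) => fun b =>
      b (Fin.castAdd (M n) i) + ∑ a ∈ univ.filter (fun a => a i = 1), b (idx n a)
  | some (.inr a) => if a ∈ Z then 0 else fun b => b (idx n a)

lemma isAffine_zero : IsAffine (0 : (Fin (n + M n) → ZMod 2) → ZMod 2) :=
  ⟨0, ∅, by simp⟩

lemma isAffine_coord (j : Fin (n + M n)) : IsAffine (fun b => b j) :=
  ⟨0, {j}, by simp⟩

lemma isAffine_Fq (a a' : Fin n → ZMod 2) : IsAffine (Fq n a a') := by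
  unfold Fq
  split
  · exact isAffine_zero n
  · exact isAffine_coord n _

lemma sum_idx (S : Finset (Fin n → ZMod 2)) (b : Fin (n + M n) → ZMod 2) :
    ∑ j ∈ S.image (idx n), b j = ∑ a ∈ S, b (idx n a) :=
  Finset.sum_image (fun x _ y _ h => idx_injective n h)

lemma isAffine_L (Z : Set (Fin n → ZMod 2)) (j : J n) : IsAffine (L n Z j) := by
  match j with
  | none =>
      refine ⟨1, univ.image (idx n), fun b => ?_⟩
      rw [L, sum_idx]
  | some (.inl i) =>
      refine ⟨0, insert (Fin.castAdd (M n) i) ((univ.filter (fun a => a i = 1)).image (idx n)),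
        fun b => ?_⟩
      rw [L, Finset.sum_insert (by
        simp only [Finset.mem_image]
        rintro ⟨a, -, h⟩
        exact castAdd_ne_idx n i a h.symm), sum_idx, zero_add]
  | some (.inr a) =>
      rw [L]
      split
      · exact isAffine_zero n
      · exact isAffine_coord n _

lemma zmod2 (v : ZMod 2) : v = 0 ∨ v = 1 := by revert v; decide

lemma zmod2_add_eq_zero {v w : ZMod 2} (h : v + w = 0) : v = w := by revert v w h; decide

/-- satisfying `lift z` facts -/
lemma lift_sat (Z : Set (Fin n → ZMod 2)) (z : Fin n → ZMod 2) (hz : z ∈ Z) :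
    (∀ a a' : Fin n → ZMod 2, Fq n a a' (lift n z) * Fq n a' a (lift n z) = 0)
    ∧ (∀ j : J n, L n Z j (lift n z) = 0) := by
  constructor
  · intro a a'
    by_cases h : a = a'
    · simp [Fq, h]
    · rw [Fq, if_neg h, Fq, if_neg (Ne.symm h)]
      simp only [lift_idx]
      by_cases ha : a = z
      · rw [if_neg (fun hh : a' = z => h (ha.trans hh.symm)), mul_zero]
      · rw [if_neg ha, zero_mul]
  · intro j
    match j with
    | none =>
        simp only [L, lift_idx]
        rw [Finset.sum_ite_eq' univ z (fun _ => (1 : ZMod 2))]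
        simp only [mem_univ, if_true]
        decide
    | some (.inl i) =>
        simp only [L, lift_castAdd, lift_idx]
        rw [Finset.sum_ite_eq' _ z (fun _ => (1 : ZMod 2))]
        simp only [Finset.mem_filter, mem_univ, true_and]
        rcases zmod2 (z i) with h | h <;> rw [h] <;> decide
    | some (.inr a) =>
        by_cases ha : a ∈ Z
        · simp only [L, if_pos ha]
          rfl
        · simp only [L, if_neg ha, lift_idx]
          rw [if_neg (by rintro rfl; exact ha hz)]

/-- the converse: any satisfying assignment is a lift -/
lemma sat_eq_lift (Z : Set (Fin n → ZMod 2)) (b : Fin (n + M n) → ZMod 2)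
    (h1 : ∀ a a' : Fin n → ZMod 2, Fq n a a' b * Fq n a' a b = 0)
    (h2 : ∀ j : J n, L n Z j b = 0) :
    ∃ z ∈ Z, b = lift n z := by
  classical
  set y : (Fin n → ZMod 2) → ZMod 2 := fun a => b (idx n a) with hy
  have hprod : ∀ a a', a ≠ a' → y a * y a' = 0 := by
    intro a a' hne
    have := h1 a a'
    rwa [Fq, if_neg hne, Fq, if_neg (Ne.symm hne)] at this
  have hpar : ∑ a : Fin n → ZMod 2, y a = 1 := by
    have := h2 none
    simp only [L] at this
    rcases zmod2 (∑ a : Fin n → ZMod 2, y a) with h | h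
    · rw [h] at this; simp at this
    · exact h
  have hex : ∃ z0, y z0 = 1 := by
    by_contra hc
    push_neg at hc
    have : ∀ a, y a = 0 := fun a => (zmod2 (y a)).resolve_right (hc a)
    rw [Finset.sum_congr rfl (fun a _ => this a)] at hpar
    simp at hpar
  obtain ⟨z0, hz0⟩ := hex
  have huniq : ∀ a, y a = if a = z0 then 1 else 0 := by
    intro a
    by_cases h : a = z0
    · rw [if_pos h, h, hz0]
    · rw [if_neg h]
      have := hprod a z0 h
      rwa [hz0, mul_one] at this
  have hz0Z : z0 ∈ Z := by
    have := h2 (some (.inr z0))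
    simp only [L] at this
    by_contra hc
    rw [if_neg hc] at this
    rw [show b (idx n z0) = y z0 from rfl, hz0] at this
    exact one_ne_zero this
  refine ⟨z0, hz0Z, ?_⟩
  have hlink : ∀ i : Fin n, b (Fin.castAdd (M n) i) = z0 i := by
    intro i
    have := h2 (some (.inl i))
    simp only [L] at this
    have hs : ∑ a ∈ univ.filter (fun a => a i = 1), b (idx n a)
        = if z0 i = 1 then 1 else 0 := by
      calc ∑ a ∈ univ.filter (fun a => a i = 1), b (idx n a)
          = ∑ a ∈ univ.filter (fun a => a i = 1), (if a = z0 then 1 else 0) :=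
            Finset.sum_congr rfl (fun a _ => huniq a)
        _ = if z0 ∈ univ.filter (fun a => a i = 1) then 1 else 0 :=
            Finset.sum_ite_eq' _ z0 (fun _ => (1 : ZMod 2))
        _ = if z0 i = 1 then 1 else 0 := by simp
    rw [hs] at this
    have := zmod2_add_eq_zero this
    rcases zmod2 (z0 i) with h | h <;> rw [h] at this ⊢ <;> simpa using this
  funext j
  refine Fin.addCases (fun i => ?_) (fun p => ?_) j
  · rw [lift_castAdd, hlink]
  · rw [lift_natAdd]
    have : b (Fin.natAdd n p) = y ((E n).symm p) := by
      rw [hy]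
      simp only [idx, Equiv.apply_symm_apply]
    rw [this, huniq]
    by_cases h : (E n).symm p = z0
    · rw [if_pos h, if_pos (by rw [← h]; simp)]
    · rw [if_neg h, if_neg (by intro hh; exact h (by rw [hh]; simp))]

end TwoXNFAux

open TwoXNFAux in
/-- Every subset `Z` of `Fin n → ZMod 2` (equivalently, the zero set of an
arbitrary ideal of the Boolean polynomial ring `R_n`) has a 2-XNF
representation: the projection to the first `n` coordinates restricts to a
bijection from the common zero set of finitely many products `f i * g i` of
affine functions together with finitely many affine functions `ℓ j` onto `Z`. -/
theorem two_xnf_representation_exists (n : ℕ) (Z : Set (Fin n → ZMod 2)) :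
    ∃ (m k s : ℕ)
      (f g : Fin k → ((Fin (n + m) → ZMod 2) → ZMod 2))
      (ℓ : Fin s → ((Fin (n + m) → ZMod 2) → ZMod 2)),
      (∀ i, IsAffine (f i)) ∧ (∀ i, IsAffine (g i)) ∧ (∀ j, IsAffine (ℓ j)) ∧
      Set.BijOn (fun b => b ∘ Fin.castAdd m)
        {b : Fin (n + m) → ZMod 2 | (∀ i, f i b * g i b = 0) ∧ (∀ j, ℓ j b = 0)}
        Z := by
  classical
  set P := (Fin n → ZMod 2) × (Fin n → ZMod 2)
  set eK : P ≃ Fin (Fintype.card P) := Fintype.equivFin _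
  set eS : J n ≃ Fin (Fintype.card (J n)) := Fintype.equivFin _
  refine ⟨M n, Fintype.card P, Fintype.card (J n),
    fun i => Fq n (eK.symm i).1 (eK.symm i).2,
    fun i => Fq n (eK.symm i).2 (eK.symm i).1,
    fun j => L n Z (eS.symm j),
    fun i => isAffine_Fq n _ _, fun i => isAffine_Fq n _ _, fun j => isAffine_L n Z _, ?_⟩
  have hset : {b : Fin (n + M n) → ZMod 2 |
      (∀ i, Fq n (eK.symm i).1 (eK.symm i).2 b * Fq n (eK.symm i).2 (eK.symm i).1 b = 0) ∧
      (∀ j, L n Z (eS.symm j) b = 0)}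
      = {b | ∃ z ∈ Z, b = lift n z} := by
    ext b
    simp only [Set.mem_setOf_eq]
    constructor
    · rintro ⟨hq, hl⟩
      exact sat_eq_lift n Z b
        (fun a a' => by simpa using hq (eK (a, a')))
        (fun j => by simpa using hl (eS j))
    · rintro ⟨z, hz, rfl⟩
      obtain ⟨hq, hl⟩ := lift_sat n Z z hz
      exact ⟨fun i => hq _ _, fun j => hl _⟩
  rw [hset]
  have hproj : ∀ z : Fin n → ZMod 2, (lift n z) ∘ Fin.castAdd (M n) = z := by
    intro z
    funext i
    exact lift_castAdd n z i
  refine ⟨?_, ?_, ?_⟩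
  · rintro b ⟨z, hz, rfl⟩
    exact Set.mem_of_eq_of_mem (hproj z) hz
  · rintro b1 ⟨z1, hz1, rfl⟩ b2 ⟨z2, hz2, rfl⟩ h
    have h' : z1 = z2 := by
      calc z1 = lift n z1 ∘ Fin.castAdd (M n) := (hproj z1).symm
        _ = lift n z2 ∘ Fin.castAdd (M n) := h
        _ = z2 := hproj z2
    rw [h']
  · intro z hz
    exact ⟨lift n z, ⟨z, hz, rfl⟩, hproj z⟩
end

section
/- Let R be a Boolean ring, I an ideal of R, and E a binary relation on R such that E f g implies (f+1)*g ∈ I. Then for every f ∈ R and every g ∈ Δ_f (every finite sum of descendants of f), one has (f+1)*g ∈ I. -/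
/-- If `E` satisfies the edge property with respect to an ideal `I` of a
Boolean ring, then for every `g` in the space of descendants `Δ_f` of `f`
(the additive subgroup generated by the descendants of `f`), one has
`(f+1)*g ∈ I`. -/
theorem descendant_space_edge_property (R : Type*) [BooleanRing R]
    (I : Ideal R) (E : R → R → Prop)
    (hE : ∀ f g, E f g → (f + 1) * g ∈ I) (f g : R)
    (hg : g ∈ AddSubgroup.closure {h : R | Relation.ReflTransGen E f h}) :
    (f + 1) * g ∈ I := by
  have hdesc : ∀ h, Relation.ReflTransGen E f h → (f + 1) * h ∈ I := by
    intro h hrel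
    induction hrel with
    | refl =>
        have : (f + 1) * f = 0 := by
          rw [add_mul, one_mul, BooleanRing.mul_self, BooleanRing.add_self]
        rw [this]; exact I.zero_mem
    | tail hab hbc ih =>
        rename_i b c
        have h1 : (b + 1) * c ∈ I := hE _ _ hbc
        have key : (f + 1) * c = (f + 1) * ((b + 1) * c) + ((f + 1) * b) * c := by
          ring_nf
          abel_nf
          simp [mul_two, BooleanRing.add_self]
        rw [key]
        exact I.add_mem (I.mul_mem_left _ h1) (I.mul_mem_right _ ih)
  refine AddSubgroup.closure_induction (fun x hx => hdesc x hx) (by simp) ?_ ?_ hg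
  · intro a b _ _ ha hb
    rw [mul_add]; exact I.add_mem ha hb
  · intro a _ ha
    rw [mul_neg]; exact I.neg_mem ha
end

section
/- Let R be a Boolean ring, I an ideal of R, and E a binary relation on R such that E f g implies (f+1)*g ∈ I. Let f, g ∈ R. If there exists h ∈ R with h ∈ Δ_f and h + 1 ∈ Δ_g (i.e., Δ_f ∩ (1 + Δ_g) is nonempty), then (f+1)*(g+1) ∈ I. -/
/-!
Multiplication by `f + 1` sends every descendant of `f` into `I`: for `f` itself because
`(f + 1) * f = 0`, and along an edge `b → c` because
`(f + 1) * c = (f + 1) * ((b + 1) * c) + c * ((f + 1) * b)` in a Boolean ring. Being additive,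
it then sends all of `Δ_f` into `I`, and likewise `g + 1` sends `Δ_g` into `I`. Finally
`(f + 1) * (g + 1) = (g + 1) * ((f + 1) * h) + (f + 1) * ((g + 1) * (h + 1))`.
-/

namespace BooleanRing

variable {R : Type*} [BooleanRing R] (I : Ideal R) {E : R → R → Prop}

theorem one_add_mul_mem_of_reflTransGen (hE : ∀ f g, E f g → (f + 1) * g ∈ I) {f p : R}
    (hp : Relation.ReflTransGen E f p) : (f + 1) * p ∈ I := by
  induction hp with
  | refl =>
    rw [add_comm, mul_comm, mul_one_add_self]
    exact I.zero_mem
  | @tail b c _ hbc ih =>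
    have split : (f + 1) * c = (f + 1) * ((b + 1) * c) + c * ((f + 1) * b) := by
      linear_combination (-(f * c) - c) * add_self b
    rw [split]
    exact I.add_mem (I.mul_mem_left _ (hE b c hbc)) (I.mul_mem_left _ ih)

theorem one_add_mul_mem_of_mem_closure_descendants (hE : ∀ f g, E f g → (f + 1) * g ∈ I)
    {f p : R} (hp : p ∈ AddSubgroup.closure {q : R | Relation.ReflTransGen E f q}) :
    (f + 1) * p ∈ I := by
  let K : AddSubgroup R := (Submodule.comap (LinearMap.mulLeft R (f + 1)) I).toAddSubgroup
  have hK : AddSubgroup.closure {q : R | Relation.ReflTransGen E f q} ≤ K :=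
    (AddSubgroup.closure_le K).2 fun q hq => one_add_mul_mem_of_reflTransGen I hE hq
  exact hK hp

end BooleanRing

/-- If `E` satisfies the edge property with respect to an ideal `I` of a
Boolean ring and there is `h` with `h ∈ Δ_f` and `h + 1 ∈ Δ_g`
(i.e. `Δ_f ∩ (1 + Δ_g) ≠ ∅`), then `(f+1)*(g+1) ∈ I`. -/
theorem descendant_spaces_intersect_neg (R : Type*) [BooleanRing R]
    (I : Ideal R) (E : R → R → Prop)
    (hE : ∀ f g, E f g → (f + 1) * g ∈ I) (f g : R)
    (h : R)
    (hf : h ∈ AddSubgroup.closure {p : R | Relation.ReflTransGen E f p})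
    (hg : h + 1 ∈ AddSubgroup.closure {p : R | Relation.ReflTransGen E g p}) :
    (f + 1) * (g + 1) ∈ I := by
  have hfh := BooleanRing.one_add_mul_mem_of_mem_closure_descendants I hE hf
  have hgh := BooleanRing.one_add_mul_mem_of_mem_closure_descendants I hE hg
  have split : (f + 1) * (g + 1) = (g + 1) * ((f + 1) * h) + (f + 1) * ((g + 1) * (h + 1)) := by
    linear_combination (-(f + 1) * (g + 1)) * BooleanRing.add_self h
  rw [split]
  exact I.add_mem (I.mul_mem_left _ hfh) (I.mul_mem_left _ hgh)
end

section
/- Let R be a Boolean ring, I an ideal of R, and E a binary relation on R such that E f g implies (f+1)*g ∈ I. Then for every f ∈ R, every element lying both in Δ_f and in Δ_{f+1} belongs to I; that is, Δ_f ∩ Δ_{f+1} ⊆ I. -/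
/-!
Every descendant `h` of `f` satisfies `(f + 1) * h ∈ I`: along an edge `b → c` one has
`(f + 1) * c = (f + 1) * ((b + 1) * c) + ((f + 1) * b) * c`. This property is additive in `h`,
so it holds on all of `Δ_f`. On `Δ_f ∩ Δ_{f+1}` we get both `(f + 1) * g ∈ I` and `f * g ∈ I`,
and these add up to `g`.
-/

namespace BooleanRing

variable {R : Type*} [BooleanRing R] {I : Ideal R} {E : R → R → Prop}

theorem add_one_mul_self (f : R) : (f + 1) * f = 0 := by
  rw [add_mul, one_mul, mul_self, add_self]

theorem add_one_mul_mem_of_reflTransGen (hE : ∀ f g, E f g → (f + 1) * g ∈ I) {f h : R}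
    (hfh : Relation.ReflTransGen E f h) : (f + 1) * h ∈ I := by
  induction hfh with
  | refl => simp [add_one_mul_self]
  | @tail b c _ hbc ih =>
    have hsplit : (f + 1) * c = (f + 1) * ((b + 1) * c) + (f + 1) * b * c := by
      linear_combination -add_self ((f + 1) * b * c)
    rw [hsplit]
    exact I.add_mem (I.mul_mem_left _ (hE b c hbc)) (I.mul_mem_right c ih)

theorem add_one_mul_mem_of_mem_closure (hE : ∀ f g, E f g → (f + 1) * g ∈ I) {f g : R}
    (hg : g ∈ AddSubgroup.closure {h | Relation.ReflTransGen E f h}) : (f + 1) * g ∈ I := by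
  suffices AddSubgroup.closure {h | Relation.ReflTransGen E f h} ≤
      I.toAddSubgroup.comap (AddMonoidHom.mulLeft (f + 1)) from this hg
  exact (AddSubgroup.closure_le _).2 fun _ ↦ add_one_mul_mem_of_reflTransGen hE

end BooleanRing

/-- If `E` satisfies the edge property with respect to an ideal `I` of a
Boolean ring, then `Δ_f ∩ Δ_{f+1} ⊆ I`: every element lying both in the space
of descendants of `f` and in that of `f + 1` belongs to `I`. -/
theorem descendant_spaces_intersection_subset (R : Type*) [BooleanRing R]
    (I : Ideal R) (E : R → R → Prop)
    (hE : ∀ f g, E f g → (f + 1) * g ∈ I) (f : R) :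
    ∀ g : R,
      g ∈ AddSubgroup.closure {h : R | Relation.ReflTransGen E f h} →
      g ∈ AddSubgroup.closure {h : R | Relation.ReflTransGen E (f + 1) h} →
      g ∈ I := by
  intro g hf hf'
  have h₁ := BooleanRing.add_one_mul_mem_of_mem_closure hE hf
  have h₂ := BooleanRing.add_one_mul_mem_of_mem_closure hE hf'
  have hg : g = (f + 1) * g + (f + 1 + 1) * g := by
    linear_combination -BooleanRing.add_self ((f + 1) * g)
  rw [hg]
  exact I.add_mem h₁ h₂
end

section
/- Let R be a Boolean ring, I an ideal of R, V a finite set of elements of R closed under the map x ↦ x + 1, and E a binary relation contained in V × V satisfying the edge property (E f g implies (f+1)*g ∈ I) and skew-symmetry (E f g implies E (g+1) (f+1)). Consider the equivalence relation on V defined by f ∼ g iff the reflexive-transitive closure of E relates f to g and also relates g to f; its equivalence classes are the strongly connected components of the implication graph (V, E). If the number of equivalence classes is odd, then 1 ∈ I (so I is the unit ideal and the corresponding 2-XNF formula is unsatisfiable). -/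
open Relation

private lemma invol_parity {α : Type*} [DecidableEq α] :
    ∀ (T : Finset α) (i : α → α), (∀ a ∈ T, i a ∈ T) → (∀ a ∈ T, i (i a) = a) →
      Odd T.card → ∃ a ∈ T, i a = a := by
  intro T
  induction T using Finset.strongInduction with
  | _ T IH =>
    intro i hmem hii hodd
    obtain ⟨a, ha⟩ : T.Nonempty := Finset.card_pos.mp hodd.pos
    by_cases hfix : i a = a
    · exact ⟨a, ha, hfix⟩
    · set T' := (T.erase a).erase (i a) with hT'
      have hia : i a ∈ T := hmem a ha
      have hsub : T' ⊂ T := by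
        refine Finset.ssubset_iff_of_subset ?_ |>.mpr ⟨a, ha, ?_⟩
        · exact (Finset.erase_subset _ _).trans (Finset.erase_subset _ _)
        · simp [hT']
      have hmemT' : ∀ b ∈ T', b ∈ T := fun b hb => hsub.1 hb
      have hmem' : ∀ b ∈ T', i b ∈ T' := by
        intro b hb
        have hbT := hmemT' b hb
        have hb1 : b ≠ a := by simp [hT'] at hb; tauto
        have hb2 : b ≠ i a := by simp [hT'] at hb; tauto
        have h1 : i b ≠ i a := fun h => hb1 (by
          have := congrArg i h; rwa [hii b hbT, hii a ha] at this)
        have h2 : i b ≠ a := fun h => hb2 (by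
          have := congrArg i h; rwa [hii b hbT] at this)
        simp [hT', Finset.mem_erase, h1, h2, hmem b hbT]
      have hii' : ∀ b ∈ T', i (i b) = b := fun b hb => hii b (hmemT' b hb)
      have hcard : T'.card + 2 = T.card := by
        rw [hT', Finset.card_erase_of_mem (Finset.mem_erase.mpr ⟨hfix, hia⟩),
          Finset.card_erase_of_mem ha]
        have : 2 ≤ T.card := Finset.one_lt_card.mpr ⟨a, ha, i a, hia, fun h => hfix h.symm⟩
        omega
      have hodd' : Odd T'.card := by
        rcases hodd with ⟨k, hk⟩
        exact ⟨k - 1, by omega⟩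
      obtain ⟨b, hb, hfb⟩ := IH T' hsub i hmem' hii' hodd'
      exact ⟨b, hmemT' b hb, hfb⟩

/-- If the implication graph `(V, E)` (with `V` a finite set closed under
`x ↦ x + 1`, `E ⊆ V × V` satisfying the edge property and skew-symmetry)
has an odd number of strongly connected components, then `1 ∈ I`, i.e. the
corresponding 2-XNF formula is unsatisfiable. -/
theorem odd_scc_count_unsat (R : Type*) [BooleanRing R] (I : Ideal R)
    (V : Finset R) (hV : ∀ x ∈ V, x + 1 ∈ V)
    (E : R → R → Prop)
    (hEV : ∀ f g, E f g → f ∈ V ∧ g ∈ V)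
    (hE : ∀ f g, E f g → (f + 1) * g ∈ I)
    (hskew : ∀ f g, E f g → E (g + 1) (f + 1))
    (hodd : Odd ({C : Set R | ∃ f ∈ V,
        C = {g : R | g ∈ V ∧ Relation.ReflTransGen E f g ∧
              Relation.ReflTransGen E g f}}.ncard)) :
    (1 : R) ∈ I := by
  classical
  have h2 : (1 : R) + 1 = 0 := BooleanRing.add_self 1
  have hcan : ∀ x : R, x + 1 + 1 = x := fun x => by
    rw [add_assoc, h2, add_zero]
  -- path lemma
  have hpath : ∀ f g, ReflTransGen E f g → (f + 1) * g ∈ I := by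
    intro f g h
    induction h with
    | refl => rw [add_mul, one_mul, BooleanRing.mul_self, BooleanRing.add_self]; exact I.zero_mem
    | @tail b c hfb hbc ih =>
      have h1 : (b + 1) * c ∈ I := hE b c hbc
      have key : (f + 1) * c = ((f + 1) * b) * c + (f + 1) * ((b + 1) * c) := by
        have h20 : (2 : R) = 0 := by rw [← one_add_one_eq_two, h2]
        linear_combination (-((f + 1) * b * c)) * h20
      rw [key]
      exact I.add_mem (I.mul_mem_right c ih) (I.mul_mem_left _ h1)
  -- negation of paths
  have hneg : ∀ f g, ReflTransGen E f g → ReflTransGen E (g + 1) (f + 1) := by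
    intro f g h
    induction h with
    | refl => exact ReflTransGen.refl
    | @tail b c hfb hbc ih => exact ReflTransGen.head (hskew b c hbc) ih
  set cls : R → Set R := fun f => {g : R | g ∈ V ∧ ReflTransGen E f g ∧ ReflTransGen E g f}
    with hcls
  set S : Set (Set R) := {C : Set R | ∃ f ∈ V, C = cls f} with hS
  have hSfin : S.Finite := by
    apply Set.Finite.subset (Set.Finite.image cls V.finite_toSet)
    rintro C ⟨f, hf, rfl⟩
    exact ⟨f, hf, rfl⟩
  set i : Set R → Set R := fun C => (· + 1) '' C with hi
  have hcls_neg : ∀ f, cls (f + 1) = i (cls f) := by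
    intro f
    ext g
    constructor
    · rintro ⟨hgV, h1, h2'⟩
      refine ⟨g + 1, ⟨hV g hgV, ?_, ?_⟩, hcan g⟩
      · have := hneg _ _ h2'; rwa [hcan] at this
      · have := hneg _ _ h1; rwa [hcan] at this
    · rintro ⟨h, ⟨hhV, h1, h2'⟩, rfl⟩
      exact ⟨hV h hhV, hneg _ _ h2', hneg _ _ h1⟩
  have hiinv : ∀ C, i (i C) = C := by
    intro C
    simp only [hi, Set.image_image, hcan, Set.image_id']
  -- transfer to finset
  set T : Finset (Set R) := hSfin.toFinset with hT
  have hcard : S.ncard = T.card := by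
    rw [hT, Set.ncard_eq_toFinset_card S hSfin]
  have hmem : ∀ C ∈ T, i C ∈ T := by
    intro C hC
    rw [Set.Finite.mem_toFinset] at hC ⊢
    obtain ⟨f, hf, rfl⟩ := hC
    exact ⟨f + 1, hV f hf, (hcls_neg f).symm⟩
  obtain ⟨C, hC, hfixC⟩ := invol_parity T i hmem (fun C _ => hiinv C) (hcard ▸ hodd)
  rw [Set.Finite.mem_toFinset] at hC
  obtain ⟨f, hf, rfl⟩ := hC
  have hf1 : f + 1 ∈ cls f := by
    rw [← hfixC, ← hcls_neg]
    exact ⟨hV f hf, ReflTransGen.refl, ReflTransGen.refl⟩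
  obtain ⟨-, hp1, hp2⟩ := hf1
  have m1 : f + 1 ∈ I := by have := hpath _ _ hp1; rwa [BooleanRing.mul_self] at this
  have m2 : f ∈ I := by
    have := hpath _ _ hp2; rwa [hcan, BooleanRing.mul_self] at this
  have : f + (f + 1) ∈ I := I.add_mem m2 m1
  rwa [← add_assoc, BooleanRing.add_self, zero_add] at this
end

section
/- Let R be a Boolean ring, I an ideal of R, and E a binary relation on R such that E f g implies (f+1)*g ∈ I. If f ∈ R is a failed lineral, i.e., 1 ∈ Δ_f (the constant 1 is a finite sum of descendants of f), then f + 1 ∈ I. -/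
/-- If `E` satisfies the edge property with respect to an ideal `I` of a
Boolean ring and `f` is a failed lineral (`1 ∈ Δ_f`), then `f + 1 ∈ I`. -/
theorem failed_lineral (R : Type*) [BooleanRing R] (I : Ideal R)
    (E : R → R → Prop)
    (hE : ∀ f g, E f g → (f + 1) * g ∈ I) (f : R)
    (hf : (1 : R) ∈ AddSubgroup.closure {h : R | Relation.ReflTransGen E f h}) :
    f + 1 ∈ I := by
  set S : AddSubgroup R :=
    { carrier := {g : R | (f + 1) * g ∈ I}
      zero_mem' := by simp
      add_mem' := fun {a b} ha hb => by
        simpa [mul_add] using I.add_mem ha hb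
      neg_mem' := fun {a} ha => by simpa using ha } with hS
  have hdesc : {h : R | Relation.ReflTransGen E f h} ⊆ S := by
    intro g hg
    induction hg with
    | refl =>
        show (f + 1) * f ∈ I
        have : (f + 1) * f = 0 := by
          rw [add_mul, one_mul, BooleanRing.mul_self, BooleanRing.add_self]
        simp [this]
    | tail hab hbc ih =>
        rename_i b c
        show (f + 1) * c ∈ I
        have h1 : (f + 1) * ((b + 1) * c) ∈ I := I.mul_mem_left _ (hE _ _ hbc)
        have h2 : ((f + 1) * b) * c ∈ I := I.mul_mem_right _ ih
        have : (f + 1) * c = (f + 1) * ((b + 1) * c) + ((f + 1) * b) * c := by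
          ring_nf
          simp [mul_two, mul_comm, mul_assoc, mul_left_comm, BooleanRing.add_self,
            add_assoc, add_left_comm, add_comm]
        rw [this]
        exact I.add_mem h1 h2
  have h1 : (f + 1) * 1 ∈ I := AddSubgroup.closure_le (K := S) |>.mpr hdesc hf
  rwa [mul_one] at h1
end

section
/- Let n ∈ ℕ, let I be an ideal of the ring R_n of all functions (Fin n → ZMod 2) → ZMod 2, and let E be a binary relation on R_n such that E f g implies (f+1)*g ∈ I. Then for every f ∈ R_n, Z(I) ⊆ Z(I ∪ D_f) ∪ Z(I ∪ D_{f+1}): every common zero of I is a common zero of I together with all descendants of f, or a common zero of I together with all descendants of f + 1. (Hence the pair (D_f, D_{f+1}) satisfies the covering condition Z(I) ⊆ Z(I + ⟨D_f⟩) ∪ Z(I + ⟨D_{f+1}⟩) of a decision.) -/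
/-- The covering condition of the decision `(D_f, D_{f+1})`: every common zero
of the ideal `I` is a common zero of `I` together with all descendants of `f`,
or a common zero of `I` together with all descendants of `f + 1`. -/
theorem decision_descendants_cover (n : ℕ)
    (I : Ideal ((Fin n → ZMod 2) → ZMod 2))
    (E : ((Fin n → ZMod 2) → ZMod 2) → ((Fin n → ZMod 2) → ZMod 2) → Prop)
    (hE : ∀ f g, E f g → (f + 1) * g ∈ I)
    (f : (Fin n → ZMod 2) → ZMod 2) :
    {a : Fin n → ZMod 2 | ∀ h ∈ (I : Set ((Fin n → ZMod 2) → ZMod 2)), h a = 0} ⊆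
      {a : Fin n → ZMod 2 | ∀ h ∈ (I : Set ((Fin n → ZMod 2) → ZMod 2)) ∪
          {g | Relation.ReflTransGen E f g}, h a = 0} ∪
      {a : Fin n → ZMod 2 | ∀ h ∈ (I : Set ((Fin n → ZMod 2) → ZMod 2)) ∪
          {g | Relation.ReflTransGen E (f + 1) g}, h a = 0} := by
  intro a ha
  have key : ∀ f₀ : (Fin n → ZMod 2) → ZMod 2, f₀ a = 0 →
      ∀ g, Relation.ReflTransGen E f₀ g → g a = 0 := by
    intro f₀ hf₀ g hg
    induction hg with
    | refl => exact hf₀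
    | tail _ hedge ih =>
      rename_i b c _
      have := ha _ (hE b c hedge)
      simp only [Pi.mul_apply, Pi.add_apply, Pi.one_apply, ih, zero_add, one_mul] at this
      exact this
  rcases (by decide : ∀ x : ZMod 2, x = 0 ∨ x = 1) (f a) with h0 | h1
  · left
    rintro h (hI | hD)
    · exact ha h hI
    · exact key f h0 h hD
  · right
    rintro h (hI | hD)
    · exact ha h hI
    · refine key (f + 1) ?_ h hD
      simp [h1]; decide
end

section
/- Let n ∈ ℕ, let I be an ideal of the ring R_n of all functions (Fin n → ZMod 2) → ZMod 2, and let E be a binary relation on R_n such that E f g implies (f+1)*g ∈ I. Let r ≥ 1 and let f_1, …, f_r ∈ R_n satisfy E f_i f_{i+1} for all 1 ≤ i ≤ r − 1 (a path f_1 → ⋯ → f_r in the implication graph). Then Z(I) ⊆ Z(I ∪ {f_1 + f_i | 2 ≤ i ≤ r}) ∪ Z(I ∪ {f_1 + 1, f_r}): every common zero of I is either a common zero of I together with all differences f_1 + f_i, or a common zero of I together with f_1 + 1 and f_r. (This is the covering condition of the MaxPath decision heuristic.) -/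
/-- The covering condition of the MaxPath decision heuristic: given a path
`f 0 → ⋯ → f (r-1)` in the implication graph, every common zero of `I` is
either a common zero of `I` together with all differences `f 0 + f i`, or a
common zero of `I` together with `f 0 + 1` and `f (r-1)`. -/
theorem decision_maxpath_cover (n r : ℕ) (hr : 1 ≤ r)
    (I : Ideal ((Fin n → ZMod 2) → ZMod 2))
    (E : ((Fin n → ZMod 2) → ZMod 2) → ((Fin n → ZMod 2) → ZMod 2) → Prop)
    (hE : ∀ f g, E f g → (f + 1) * g ∈ I)
    (f : Fin r → ((Fin n → ZMod 2) → ZMod 2))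
    (hpath : ∀ (i : Fin r) (h : (i : ℕ) + 1 < r), E (f i) (f ⟨(i : ℕ) + 1, h⟩)) :
    {a : Fin n → ZMod 2 | ∀ h ∈ (I : Set ((Fin n → ZMod 2) → ZMod 2)), h a = 0} ⊆
      {a : Fin n → ZMod 2 | ∀ h ∈ (I : Set ((Fin n → ZMod 2) → ZMod 2)) ∪
          {p | ∃ i : Fin r, 0 < (i : ℕ) ∧ p = f ⟨0, hr⟩ + f i}, h a = 0} ∪
      {a : Fin n → ZMod 2 | ∀ h ∈ (I : Set ((Fin n → ZMod 2) → ZMod 2)) ∪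
          {f ⟨0, hr⟩ + 1, f ⟨r - 1, by omega⟩}, h a = 0} := by
  intro a ha
  simp only [Set.mem_setOf_eq] at ha
  -- edge relation at the point a
  have edge : ∀ (k : ℕ) (h : k + 1 < r),
      (f ⟨k, by omega⟩ a + 1) * f ⟨k + 1, h⟩ a = 0 := by
    intro k h
    have := ha _ (hE _ _ (hpath ⟨k, by omega⟩ h))
    simpa using this
  have step : ∀ (k : ℕ) (h : k + 1 < r),
      f ⟨k, by omega⟩ a = 0 → f ⟨k + 1, h⟩ a = 0 := by
    intro k h h0
    have := edge k h
    rw [h0] at this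
    simpa using this
  have bstep : ∀ (k : ℕ) (h : k + 1 < r),
      f ⟨k + 1, h⟩ a = 1 → f ⟨k, by omega⟩ a = 1 := by
    intro k h h1
    have := edge k h
    rw [h1, mul_one] at this
    generalize f (⟨k, by omega⟩ : Fin r) a = x at this ⊢
    revert x; decide
  by_cases h0 : f ⟨0, hr⟩ a = 0
  · -- forward propagation: everything is zero
    left
    have all0 : ∀ k (h : k < r), f ⟨k, h⟩ a = 0 := by
      intro k
      induction k with
      | zero => intro h; exact h0
      | succ m ih => intro h; exact step m h (ih (by omega))
    intro h hh
    rcases hh with hh | hh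
    · exact ha h hh
    · obtain ⟨i, -, rfl⟩ := hh
      simp [h0, all0 i i.2]
  · have h1 : f ⟨0, hr⟩ a = 1 := by
      have : f ⟨0, hr⟩ a = 0 ∨ f ⟨0, hr⟩ a = 1 := by
        generalize f (⟨0, hr⟩ : Fin r) a = x; revert x; decide
      tauto
    by_cases hlast : f ⟨r - 1, by omega⟩ a = 0
    · right
      intro h hh
      rcases hh with hh | hh | hh
      · exact ha h hh
      · subst hh; simp only [Pi.add_apply, Pi.one_apply, h1]; decide
      · simp at hh; subst hh; exact hlast
    · -- last is 1, backward propagation: everything is 1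
      left
      have hlast1 : f ⟨r - 1, by omega⟩ a = 1 := by
        have : f ⟨r - 1, by omega⟩ a = 0 ∨ f ⟨r - 1, by omega⟩ a = 1 := by
          generalize f (⟨r - 1, by omega⟩ : Fin r) a = x; revert x; decide
        tauto
      have all1 : ∀ m (h : m < r), f ⟨r - 1 - m, by omega⟩ a = 1 := by
        intro m
        induction m with
        | zero => intro _; exact hlast1
        | succ m ih =>
          intro h
          have hm := ih (by omega)
          have heq : (⟨r - 1 - (m + 1) + 1, by omega⟩ : Fin r)
              = ⟨r - 1 - m, by omega⟩ := by
            apply Fin.ext; simp; omega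
          exact bstep (r - 1 - (m + 1)) (by omega) (by rw [heq]; exact hm)
      intro h hh
      rcases hh with hh | hh
      · exact ha h hh
      · obtain ⟨i, -, rfl⟩ := hh
        have := all1 (r - 1 - i) (by omega)
        have heq : (⟨r - 1 - (r - 1 - (i : ℕ)), by omega⟩ : Fin r) = i := by
          apply Fin.ext; simp; omega
        rw [heq] at this
        simp only [Pi.add_apply, h1, this]; decide
end
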